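/- Let A = (a_ijk) be a third order 3-dimensional symmetric tensor with entries in {-1, 0, 1} satisfying a₁₂₂ = a₁₃₃ = 1 and a₁₂₃ = 0. Then A is strictly copositive if and only if a_iii = 1 and a_iij + a_ijj ≥ 0 for all i ≠ j in {1,2,3}, and a₁₁₂ + a₁₁₃ ≥ -1. -/

import Mathlib

/-!
Necessity: evaluating the form at `eᵢ`, at `(0, 1, 1)` and at `(4, 1, 1)` forces the conditions,
since the entries are integers in `[-1, 1]`; the form with `a₁₁₂ = a₁₁₃ = -1`, `a₂₂₃ = a₂₃₃ = 1`
vanishes at `(4, 1, 1)`.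

Sufficiency: swapping `x₂ ↔ x₃` together with `a₁₁₂ ↔ a₁₁₃`, `a₂₂₃ ↔ a₂₃₃` leaves the form
invariant, so we may assume `x₃ ≤ x₂`. The conditions then give
`a₁₁₂ x₂ + a₁₁₃ x₃ ≥ -x₂` and `a₂₂₃ x₂ + a₂₃₃ x₃ ≥ x₃ - x₂`, which bounds the form below by the cubic
`x³ + y³ + z³ + 3xy² + 3xz² - 3x²y - 3y²z + 3yz²` at `(x₁, x₂, x₃)`, and this equals
`x (x² - 3xy + 3y²) + (y - z)³ + 2z³ + 3xz² > 0`.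
-/

section Entries

variable {a b c : ℝ}

lemma eq_one_of_mem_of_pos (hc : c ∈ ({-1, 0, 1} : Set ℝ)) (h : 0 < c) : c = 1 := by
  rcases hc with rfl | rfl | rfl <;> linarith

lemma neg_one_le_of_mem (hc : c ∈ ({-1, 0, 1} : Set ℝ)) : -1 ≤ c := by
  rcases hc with rfl | rfl | rfl <;> norm_num

lemma le_one_of_mem (hc : c ∈ ({-1, 0, 1} : Set ℝ)) : c ≤ 1 := by
  rcases hc with rfl | rfl | rfl <;> norm_num

lemma add_nonneg_of_mem_of_neg_one_lt (ha : a ∈ ({-1, 0, 1} : Set ℝ))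
    (hb : b ∈ ({-1, 0, 1} : Set ℝ)) (h : -1 < a + b) : 0 ≤ a + b := by
  rcases ha with rfl | rfl | rfl <;> rcases hb with rfl | rfl | rfl <;> linarith

lemma neg_one_le_add_of_mem_of_neg_two_lt (ha : a ∈ ({-1, 0, 1} : Set ℝ))
    (hb : b ∈ ({-1, 0, 1} : Set ℝ)) (h : -2 < a + b) : -1 ≤ a + b := by
  rcases ha with rfl | rfl | rfl <;> rcases hb with rfl | rfl | rfl <;> linarith

end Entries

lemma mul_sub_sub_le_mul_add_mul {a b c y z : ℝ} (ha : -1 ≤ a) (hab : c ≤ a + b)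
    (hz : 0 ≤ z) (hzy : z ≤ y) : c * z - (y - z) ≤ a * y + b * z := by
  have h₁ : -(y - z) ≤ a * (y - z) := by nlinarith
  have h₂ : c * z ≤ (a + b) * z := mul_le_mul_of_nonneg_right hab hz
  linarith

lemma extremal_cubic_pos {x y z : ℝ} (hx : 0 ≤ x) (hy : 0 ≤ y) (hz : 0 ≤ z) (hzy : z ≤ y)
    (hpos : 0 < x + y + z) :
    0 < x^3 + y^3 + z^3 + 3*x*y^2 + 3*x*z^2 - 3*x^2*y - 3*y^2*z + 3*y*z^2 := by
  have hq : 0 ≤ x^2 - 3*x*y + 3*y^2 := by nlinarith [sq_nonneg (2*x - 3*y), sq_nonneg y]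
  have hyz : 0 ≤ (y - z)^3 := pow_nonneg (sub_nonneg.2 hzy) 3
  have hsplit : x^3 + y^3 + z^3 + 3*x*y^2 + 3*x*z^2 - 3*x^2*y - 3*y^2*z + 3*y*z^2
      = x * (x^2 - 3*x*y + 3*y^2) + (y - z)^3 + 2*z^3 + 3*x*z^2 := by ring
  rw [hsplit]
  rcases hx.lt_or_eq with hx | rfl
  · have : 0 < x^2 - 3*x*y + 3*y^2 := by
      nlinarith [sq_nonneg (2*x - 3*y), sq_nonneg y, mul_pos hx hx]
    positivity
  rcases hz.lt_or_eq with hz | rfl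
  · positivity
  have hy : 0 < y := by linarith
  positivity

lemma cubic_form_pos_of_le {p q r s x y z : ℝ} (hp : -1 ≤ p) (hr : -1 ≤ r)
    (hpq : -1 ≤ p + q) (hrs : 0 ≤ r + s) (hx : 0 ≤ x) (hy : 0 ≤ y) (hz : 0 ≤ z)
    (hzy : z ≤ y) (hpos : 0 < x + y + z) :
    0 < x^3 + y^3 + z^3 + 3*p*x^2*y + 3*x*y^2 + 3*q*x^2*z + 3*x*z^2
      + 3*r*y^2*z + 3*s*y*z^2 := by
  have hL : -1 * z - (y - z) ≤ p * y + q * z := mul_sub_sub_le_mul_add_mul hp hpq hz hzy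
  have hM : 0 * z - (y - z) ≤ r * y + s * z := mul_sub_sub_le_mul_add_mul hr hrs hz hzy
  calc 0 < x^3 + y^3 + z^3 + 3*x*y^2 + 3*x*z^2 - 3*x^2*y - 3*y^2*z + 3*y*z^2 :=
        extremal_cubic_pos hx hy hz hzy hpos
    _ ≤ _ := by
        nlinarith [mul_le_mul_of_nonneg_left hL (by positivity : (0 : ℝ) ≤ 3 * x^2),
          mul_le_mul_of_nonneg_left hM (by positivity : (0 : ℝ) ≤ 3 * y * z)]

theorem stmt_14 (a₁₁₁ a₂₂₂ a₃₃₃ a₁₁₂ a₁₂₂ a₁₁₃ a₁₃₃ a₂₂₃ a₂₃₃ a₁₂₃ : ℝ)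
    (hset : ∀ c ∈ [a₁₁₁, a₂₂₂, a₃₃₃, a₁₁₂, a₁₂₂, a₁₁₃, a₁₃₃, a₂₂₃, a₂₃₃, a₁₂₃],
      c ∈ ({-1, 0, 1} : Set ℝ))
    (h122 : a₁₂₂ = 1) (h133 : a₁₃₃ = 1) (h123 : a₁₂₃ = 0) :
    (∀ x₁ x₂ x₃ : ℝ, 0 ≤ x₁ → 0 ≤ x₂ → 0 ≤ x₃ → (x₁, x₂, x₃) ≠ (0, 0, 0) →
      0 < a₁₁₁*x₁^3 + a₂₂₂*x₂^3 + a₃₃₃*x₃^3 + 3*a₁₁₂*x₁^2*x₂ + 3*a₁₂₂*x₁*x₂^2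
          + 3*a₁₁₃*x₁^2*x₃ + 3*a₁₃₃*x₁*x₃^2 + 3*a₂₂₃*x₂^2*x₃ + 3*a₂₃₃*x₂*x₃^2
          + 6*a₁₂₃*x₁*x₂*x₃) ↔
    (a₁₁₁ = 1 ∧ a₂₂₂ = 1 ∧ a₃₃₃ = 1 ∧
      a₁₁₂ + a₁₂₂ ≥ 0 ∧ a₁₁₃ + a₁₃₃ ≥ 0 ∧ a₂₂₃ + a₂₃₃ ≥ 0 ∧
      a₁₁₂ + a₁₁₃ ≥ -1) := by
  simp only [List.forall_mem_cons] at hset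
  obtain ⟨m111, m222, m333, m112, -, m113, -, m223, m233, -⟩ := hset
  subst h122 h133 h123
  constructor
  · intro H
    have e1 := eq_one_of_mem_of_pos m111 (by simpa using H 1 0 0 zero_le_one le_rfl le_rfl (by simp))
    have e2 := eq_one_of_mem_of_pos m222 (by simpa using H 0 1 0 le_rfl zero_le_one le_rfl (by simp))
    have e3 := eq_one_of_mem_of_pos m333 (by simpa using H 0 0 1 le_rfl le_rfl zero_le_one (by simp))
    subst e1 e2 e3
    have h011 := H 0 1 1 le_rfl zero_le_one zero_le_one (by simp)
    have h411 := H 4 1 1 (by norm_num) zero_le_one zero_le_one (by simp)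
    norm_num at h011 h411
    refine ⟨rfl, rfl, rfl, by linarith [neg_one_le_of_mem m112],
      by linarith [neg_one_le_of_mem m113],
      add_nonneg_of_mem_of_neg_one_lt m223 m233 (by linarith),
      neg_one_le_add_of_mem_of_neg_two_lt m112 m113
        (by linarith [le_one_of_mem m223, le_one_of_mem m233])⟩
  · rintro ⟨rfl, rfl, rfl, -, -, h23, h12⟩ x₁ x₂ x₃ hx₁ hx₂ hx₃ hne
    have hpos : 0 < x₁ + x₂ + x₃ := by
      contrapose! hne
      obtain ⟨rfl, rfl, rfl⟩ : x₁ = 0 ∧ x₂ = 0 ∧ x₃ = 0 := ⟨by linarith, by linarith, by linarith⟩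
      rfl
    rcases le_total x₃ x₂ with h | h
    · linarith [cubic_form_pos_of_le (neg_one_le_of_mem m112) (neg_one_le_of_mem m223) h12 h23
        hx₁ hx₂ hx₃ h hpos]
    · linarith [cubic_form_pos_of_le (neg_one_le_of_mem m113) (neg_one_le_of_mem m233)
        (by linarith : -1 ≤ a₁₁₃ + a₁₁₂) (by linarith : 0 ≤ a₂₃₃ + a₂₂₃) hx₁ hx₃ hx₂ h
        (by linarith)]
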